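/- The structure (ℚ>0, min, ⊗) with a ⊗ b = ab/(a+b) satisfies all commutative semiring axioms except possibly the existence of additive/multiplicative identities: both operations are commutative and associative, and ⊗ distributes over min on both sides. -/
import Mathlib


def otimes (a b : ℚ) : ℚ := a * b / (a + b)

lemma otimes_mono {a b c : ℚ} (ha : 0 < a) (hb : 0 < b) (hc : 0 < c)
    (h : b ≤ c) : otimes a b ≤ otimes a c := by
  unfold otimes
  rw [div_le_div_iff₀ (by positivity) (by positivity)]
  nlinarith [mul_le_mul_of_nonneg_left h (le_of_lt (mul_pos ha ha))]

theorem asd_semiring_axioms :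
    (∀ a b : ℚ, 0 < a → 0 < b → min a b = min b a) ∧
    (∀ a b c : ℚ, 0 < a → 0 < b → 0 < c → min (min a b) c = min a (min b c)) ∧
    (∀ a b : ℚ, 0 < a → 0 < b → otimes a b = otimes b a) ∧
    (∀ a b c : ℚ, 0 < a → 0 < b → 0 < c →
      otimes (otimes a b) c = otimes a (otimes b c)) ∧
    (∀ a b c : ℚ, 0 < a → 0 < b → 0 < c →
      otimes a (min b c) = min (otimes a b) (otimes a c)) ∧
    (∀ a b c : ℚ, 0 < a → 0 < b → 0 < c →
      otimes (min b c) a = min (otimes b a) (otimes c a)) := by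
  have hcomm : ∀ a b : ℚ, otimes a b = otimes b a := by
    intro a b; unfold otimes; ring_nf
  have hdist : ∀ a b c : ℚ, 0 < a → 0 < b → 0 < c →
      otimes a (min b c) = min (otimes a b) (otimes a c) := by
    intro a b c ha hb hc
    rcases le_total b c with h | h
    · rw [min_eq_left h, min_eq_left (otimes_mono ha hb hc h)]
    · rw [min_eq_right h, min_eq_right (otimes_mono ha hc hb h)]
  refine ⟨fun a b _ _ => min_comm a b, fun a b c _ _ _ => min_assoc a b c,
    fun a b _ _ => hcomm a b, ?_, hdist, ?_⟩
  · intro a b c ha hb hc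
    unfold otimes
    have h1 : a + b ≠ 0 := by positivity
    have h2 : b + c ≠ 0 := by positivity
    have h3 : a * b / (a + b) + c ≠ 0 := by positivity
    have h4 : a + b * c / (b + c) ≠ 0 := by positivity
    field_simp
    ring
  · intro a b c ha hb hc
    rw [hcomm _ a, hcomm b a, hcomm c a]
    exact hdist a b c ha hb hc
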